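/- Let W be a Coxeter group, I its set of involutions, and suppose given the free ℤ[u,u⁻¹]-module M on basis (a_w)_{w∈I} with the Hecke-type operators T_s as in the standard formulas. Suppose f : M → M is a ℤ-linear map satisfying: f(uⁿ m) = u⁻ⁿ f(m) for all m ∈ M, n ∈ ℤ; f(a₁) = 0; and f((T_s+1)m) = u⁻²(T_s+1)f(m) for all m ∈ M, s ∈ S. Then f = 0. -/

import Mathlib

/-!
Induct on the length of the involution `w ≠ 1`, with `s` a left descent of `w`. If `s w = w s`,
then `v = s w` is a shorter involution with `(T_s + 1) a_v = (u + 1)(a_v + a_w)`; applying `f`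
gives `(u⁻¹ + 1) f(a_w) = 0`, so `f(a_w) = 0`. Otherwise `v = s w s` is an involution of length
`ℓ(w) - 2` with `(T_s + 1) a_v = a_v + a_w`, and again `f(a_w) = 0`.

The drop by two in length is a consequence of the exchange condition, which comes from Bourbaki's
action of `W` on `W × {±1}`: `s i` sends `(t, ε)` to `(s i t s i, -ε)` if `t = s i` and to
`(s i t s i, ε)` otherwise. Hence the parity of the number of occurrences of `t` in the right
inversion sequence of a word depends only on the product of the word.
-/

open Finsupp LaurentPolynomial

namespace LaurentPolynomial

variable {R V V' : Type*} [CommSemiring R] [AddCommMonoid V] [AddCommMonoid V']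
  [Module R[T;T⁻¹] V] [Module R[T;T⁻¹] V'] [Module R V] [Module R V']
  [IsScalarTower R R[T;T⁻¹] V] [IsScalarTower R R[T;T⁻¹] V']

theorem map_smul_eq_invert_smul (f : V →ₗ[R] V')
    (hf : ∀ (n : ℤ) (m : V), f ((T n : R[T;T⁻¹]) • m) = (T (-n) : R[T;T⁻¹]) • f m)
    (c : R[T;T⁻¹]) (m : V) :
    f (c • m) = invert c • f m := by
  induction c using LaurentPolynomial.induction_on' with
  | add p q hp hq => rw [add_smul, map_add, hp, hq, map_add, add_smul]
  | C_mul_T n a =>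
    rw [mul_smul, C_eq_algebraMap, algebraMap_smul, map_smul, hf, map_mul, AlgEquiv.commutes,
      invert_T, mul_smul, algebraMap_smul]

noncomputable def invertSemilinearMap (f : V →ₗ[R] V')
    (hf : ∀ (n : ℤ) (m : V), f ((T n : R[T;T⁻¹]) • m) = (T (-n) : R[T;T⁻¹]) • f m) :
    V →ₛₗ[(invert : R[T;T⁻¹] ≃ₐ[R] R[T;T⁻¹]).toRingHom] V' where
  toFun := f
  map_add' := f.map_add
  map_smul' := map_smul_eq_invert_smul f hf

theorem T_one_add_one_ne_zero [Nontrivial R] : (T 1 + 1 : R[T;T⁻¹]) ≠ 0 := by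
  rw [← Polynomial.toLaurent_X, ← map_one Polynomial.toLaurent, ← map_add]
  exact (map_ne_zero_iff _ Polynomial.toLaurent_injective).2 (Polynomial.X_add_C_ne_zero 1)

end LaurentPolynomial

theorem mul_mul_inv_eq_iff {G : Type*} [Group G] {g t x : G} :
    g * t * g⁻¹ = x ↔ t = g⁻¹ * x * g := by
  constructor <;> rintro rfl <;> group

namespace CoxeterSystem

open scoped Classical

variable {B W : Type*} [Group W] {M : CoxeterMatrix B} (cs : CoxeterSystem M W)

local prefix:100 "s " => cs.simple
local prefix:100 "π " => cs.wordProd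
local prefix:100 "ℓ " => cs.length
local prefix:100 "ris " => cs.rightInvSeq

noncomputable def reflectionSign (i : B) (p : W × ℤˣ) : W × ℤˣ :=
  (s i * p.1 * s i, (if p.1 = s i then -1 else 1) * p.2)

lemma simple_mul_mul_simple_eq_iff {i : B} {t x : W} :
    s i * t * s i = x ↔ t = s i * x * s i := by
  constructor <;> rintro rfl <;> simp [mul_assoc]

lemma reflectionSign_involutive (i : B) : Function.Involutive (cs.reflectionSign i) := by
  rintro ⟨t, e⟩
  by_cases ht : t = s i <;>
    simp [reflectionSign, ht, mul_assoc, mul_eq_one_iff_eq_inv]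

noncomputable def reflectionSignPerm (i : B) : Equiv.Perm (W × ℤˣ) :=
  (cs.reflectionSign_involutive i).toPerm

lemma reflectionSignPerm_apply (i : B) (t : W) (e : ℤˣ) :
    cs.reflectionSignPerm i (t, e) = (s i * t * s i, (if t = s i then -1 else 1) * e) := rfl

lemma reflectionSignPerm_mul_pow_apply (i j : B) (k : ℕ) (t : W) (e : ℤˣ) :
    ((cs.reflectionSignPerm i * cs.reflectionSignPerm j) ^ k) (t, e) =
      ((s i * s j) ^ k * t * ((s i * s j) ^ k)⁻¹,
        (∏ r ∈ Finset.range (2 * k), if t = (s j * s i) ^ r * s j then -1 else 1) * e) := by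
  set P := s i * s j
  set Q := s j * s i
  have hPQ : P⁻¹ = Q := by simp [P, Q]
  have hsemi : ∀ k : ℕ, s j * P ^ k = Q ^ k * s j := fun k =>
    (SemiconjBy.pow_right (by simp [SemiconjBy, P, Q, mul_assoc]) k :
      SemiconjBy (s j) (P ^ k) (Q ^ k))
  induction k with
  | zero => simp
  | succ k ih =>
    have hcond₁ : P ^ k * t * (P ^ k)⁻¹ = s j ↔ t = Q ^ (2 * k) * s j := by
      rw [mul_mul_inv_eq_iff, mul_assoc, hsemi, ← inv_pow, hPQ, ← mul_assoc, ← pow_add, two_mul]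
    have hcond₂ : s j * (P ^ k * t * (P ^ k)⁻¹) * s j = s i ↔ t = Q ^ (2 * k + 1) * s j := by
      have hQ : Q ^ k * (s j * s i * s j) * P ^ k = Q ^ (2 * k + 1) * s j := by
        rw [mul_assoc, mul_assoc, hsemi, ← mul_assoc (s j * s i), ← pow_succ', ← mul_assoc,
          ← pow_add, ← add_assoc, ← two_mul]
      rw [simple_mul_mul_simple_eq_iff, mul_mul_inv_eq_iff, ← inv_pow, hPQ, hQ]
    rw [pow_succ', Equiv.Perm.mul_apply, Equiv.Perm.mul_apply, ih, reflectionSignPerm_apply,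
      reflectionSignPerm_apply, if_congr hcond₁ rfl rfl, if_congr hcond₂ rfl rfl,
      show 2 * (k + 1) = 2 * k + 1 + 1 by ring, Finset.prod_range_succ, Finset.prod_range_succ]
    refine Prod.ext ?_ ?_
    · simp only [pow_succ', mul_inv_rev, P, mul_assoc, cs.inv_simple]
    · simp only
      ac_rfl

lemma isLiftable_reflectionSignPerm : M.IsLiftable cs.reflectionSignPerm := by
  intro i j
  ext ⟨t, e⟩ : 1
  have hP : (s i * s j) ^ M i j = 1 := cs.simple_mul_simple_pow i j
  have hQ : (s j * s i) ^ M i j = 1 := M.symmetric i j ▸ cs.simple_mul_simple_pow j i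
  have hsign : (∏ r ∈ Finset.range (2 * M i j),
      if t = (s j * s i) ^ r * s j then (-1 : ℤˣ) else 1) = 1 := by
    simp only [two_mul, Finset.prod_range_add, pow_add, hQ, one_mul, Int.units_mul_self]
  simp [reflectionSignPerm_mul_pow_apply, hP, hsign]

noncomputable def reflectionSignRep : W →* Equiv.Perm (W × ℤˣ) :=
  cs.lift ⟨cs.reflectionSignPerm, cs.isLiftable_reflectionSignPerm⟩

lemma reflectionSignRep_wordProd (ω : List B) (t : W) (e : ℤˣ) :
    cs.reflectionSignRep (π ω) (t, e) =
      (π ω * t * (π ω)⁻¹, (-1) ^ (ris ω).count t * e) := by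
  induction ω with
  | nil => simp
  | cons i ω ih =>
    have hcond : π ω * t * (π ω)⁻¹ = s i ↔ (π ω)⁻¹ * s i * π ω = t := by
      rw [mul_mul_inv_eq_iff, eq_comm]
    rw [cs.wordProd_cons, map_mul, Equiv.Perm.mul_apply, ih, reflectionSignRep,
      cs.lift_apply_simple, reflectionSignPerm_apply, if_congr hcond rfl rfl]
    refine Prod.ext (by simp [mul_assoc]) ?_
    simp only [rightInvSeq, List.count_cons, beq_iff_eq, pow_add]
    split_ifs <;> simp [mul_comm]

lemma neg_one_pow_count_rightInvSeq_eq {ω α : List B} (h : π ω = π α) (t : W) :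
    (-1 : ℤˣ) ^ (ris ω).count t = (-1) ^ (ris α).count t := by
  have hrep := cs.reflectionSignRep_wordProd ω t 1
  rw [h, reflectionSignRep_wordProd] at hrep
  simpa using (congrArg Prod.snd hrep).symm

theorem simple_mem_rightInvSeq_of_isRightDescent {ω : List B} {i : B}
    (hi : cs.IsRightDescent (π ω) i) : s i ∈ ris ω := by
  obtain ⟨α, hα, hαω⟩ := cs.exists_isReduced (π ω * s i)
  have hprod : π ω = π (α.concat i) := by
    rw [List.concat_eq_append, cs.wordProd_append, cs.wordProd_singleton, ← hαω,
      cs.simple_mul_simple_cancel_right]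
  have hnotmem : s i ∉ ris α := fun hmem => by
    have := (cs.isRightInversion_of_mem_rightInvSeq hα hmem).2
    rw [← hαω, cs.simple_mul_simple_cancel_right] at this
    exact lt_asymm hi this
  have hcount : (ris (α.concat i)).count (s i) = 1 := by
    have hmap := List.count_map_of_injective (ris α) _ (MulAut.conj (s i)).injective (s i)
    rw [show MulAut.conj (s i) (s i) = s i by simp] at hmap
    rw [cs.rightInvSeq_concat, List.concat_eq_append, List.count_append, hmap,
      List.count_eq_zero_of_not_mem hnotmem]
    simp
  by_contra hnm
  have := cs.neg_one_pow_count_rightInvSeq_eq hprod (s i)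
  rw [hcount, List.count_eq_zero_of_not_mem hnm] at this
  exact absurd this (by decide)

lemma length_mul_simple_of_mul_self_eq_one {w : W} (hw : w * w = 1) (i : B) :
    ℓ (w * s i) = ℓ (s i * w) := by
  rw [← cs.length_inv, mul_inv_rev, cs.inv_simple, inv_eq_of_mul_eq_one_right hw]

theorem length_simple_mul_mul_simple_add_two {w : W} (hw : w * w = 1) {i : B}
    (hi : cs.IsLeftDescent w i) (hne : s i * w ≠ w * s i) :
    ℓ (s i * w * s i) + 2 = ℓ w := by
  obtain ⟨ω, hω, hωw⟩ := cs.exists_isReduced (s i * w)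
  have hlen := cs.isLeftDescent_iff.mp hi
  have hprod : π (i :: ω) = w := by rw [cs.wordProd_cons, ← hωw, cs.simple_mul_simple_cancel_left]
  have hdesc : cs.IsRightDescent (π (i :: ω)) i := by
    rw [hprod, IsRightDescent, cs.length_mul_simple_of_mul_self_eq_one hw]
    omega
  -- exchanging the letter `s i` of `i :: ω` cannot happen at the head, since `w s i ≠ s i w`
  have hmem : s i ∈ ris ω := by
    rcases List.mem_cons.mp (cs.simple_mem_rightInvSeq_of_isRightDescent hdesc) with h | h
    · rw [← hωw] at h
      refine absurd ?_ hne
      nth_rewrite 1 [h]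
      simp [mul_assoc, hw, inv_eq_of_mul_eq_one_right hw]
    · exact h
  have := (cs.isRightInversion_of_mem_rightInvSeq hω hmem).2
  rw [← hωw] at this
  rcases cs.length_mul_simple (s i * w) i with h | h <;> omega

theorem single_mem_of_mul_self_eq_one {R : Type*} [Ring R] (Ts : B → Module.End R (W →₀ R))
    (c : R)
    (hcomm : ∀ (i : B) (w : W), w * w = 1 → s i * w = w * s i → ℓ w < ℓ (s i * w) →
      Ts i (single w 1) + single w 1 = c • (single w 1 + single (s i * w) 1))
    (hnoncomm : ∀ (i : B) (w : W), w * w = 1 → s i * w ≠ w * s i → ℓ w < ℓ (s i * w) →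
      Ts i (single w 1) + single w 1 = single w 1 + single (s i * w * s i) 1)
    (K : Submodule R (W →₀ R)) (hK_one : single 1 1 ∈ K)
    (hK_Ts : ∀ (i : B) (m : W →₀ R), m ∈ K → Ts i m + m ∈ K)
    (hK_c : ∀ m : W →₀ R, c • m ∈ K → m ∈ K) {w : W} (hw : w * w = 1) :
    single w 1 ∈ K := by
  induction hn : ℓ w using Nat.strong_induction_on generalizing w with
  | _ n ih =>
  subst hn
  rcases eq_or_ne w 1 with rfl | hw₁
  · exact hK_one
  obtain ⟨i, hi⟩ := cs.exists_leftDescent_of_ne_one hw₁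
  have hlen := cs.isLeftDescent_iff.mp hi
  by_cases hc : s i * w = w * s i
  · have hv : (s i * w) * (s i * w) = 1 := by
      rw [mul_assoc, ← mul_assoc w, ← hc]; simp [mul_assoc, hw]
    have hrel := hcomm i (s i * w) hv
      (by rw [cs.simple_mul_simple_cancel_left, hc, cs.simple_mul_simple_cancel_right])
      (by rw [cs.simple_mul_simple_cancel_left]; omega)
    have hv_mem := ih _ (by omega) hv rfl
    rw [cs.simple_mul_simple_cancel_left] at hrel
    refine hK_c _ ((K.add_mem_iff_right (K.smul_mem c hv_mem)).mp ?_)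
    rw [← smul_add, ← hrel]
    exact hK_Ts i _ hv_mem
  · have hlen₂ := cs.length_simple_mul_mul_simple_add_two hw hi hc
    have hww : ∀ x : W, w * (w * x) = x := fun x => by rw [← mul_assoc, hw, one_mul]
    have hv : (s i * w * s i) * (s i * w * s i) = 1 := by simp [mul_assoc, hww]
    have hsv : s i * (s i * w * s i) = w * s i := by simp [mul_assoc]
    have hrel := hnoncomm i (s i * w * s i) hv
      (by rw [hsv, cs.simple_mul_simple_cancel_right]; exact fun h => hc h.symm)
      (by rw [hsv, cs.length_mul_simple_of_mul_self_eq_one hw]; omega)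
    rw [show s i * (s i * w * s i) * s i = w by simp [mul_assoc]] at hrel
    have hv_mem := ih _ (by omega) hv rfl
    refine (K.add_mem_iff_right hv_mem).mp ?_
    rw [← hrel]
    exact hK_Ts i _ hv_mem

end CoxeterSystem

theorem bar_involution_uniqueness_general {B W : Type*} [Group W] {M : CoxeterMatrix B}
    (cs : CoxeterSystem M W)
    (Ts : B → Module.End (LaurentPolynomial ℤ) (W →₀ LaurentPolynomial ℤ))
    (h1 : ∀ (i : B) (w : W), w * w = 1 →
      cs.simple i * w = w * cs.simple i →
      cs.length w < cs.length (cs.simple i * w) →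
      Ts i (single w 1) + single w 1 =
        (T 1 + 1 : LaurentPolynomial ℤ) • (single w 1 + single (cs.simple i * w) 1))
    (h3 : ∀ (i : B) (w : W), w * w = 1 →
      cs.simple i * w ≠ w * cs.simple i →
      cs.length w < cs.length (cs.simple i * w) →
      Ts i (single w 1) + single w 1 =
        single w 1 + single (cs.simple i * w * cs.simple i) 1)
    (f : (W →₀ LaurentPolynomial ℤ) →ₗ[ℤ] (W →₀ LaurentPolynomial ℤ))
    (hf1 : ∀ (n : ℤ) (m : W →₀ LaurentPolynomial ℤ),
      f ((T n : LaurentPolynomial ℤ) • m) = (T (-n) : LaurentPolynomial ℤ) • f m)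
    (hf2 : f (single (1 : W) (1 : LaurentPolynomial ℤ)) = 0)
    (hf3 : ∀ (i : B) (m : W →₀ LaurentPolynomial ℤ),
      f (Ts i m + m) = (T (-2) : LaurentPolynomial ℤ) • (Ts i (f m) + f m)) :
    ∀ m : W →₀ LaurentPolynomial ℤ,
      m ∈ Submodule.span (LaurentPolynomial ℤ)
        (Set.range (fun w : {w : W // w * w = 1} => single (w : W) (1 : LaurentPolynomial ℤ))) →
      f m = 0 := by
  intro m hm
  let K := LinearMap.ker (invertSemilinearMap f hf1)
  refine (Submodule.span_le (p := K)).mpr ?_ hm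
  rintro _ ⟨⟨w, hw⟩, rfl⟩
  refine cs.single_mem_of_mul_self_eq_one Ts (T 1 + 1) h1 h3 K hf2 ?_ ?_ hw
  · intro i x (hx : f x = 0)
    show f _ = 0
    rw [hf3, hx, map_zero, add_zero, smul_zero]
  · intro x (hx : f _ = 0)
    rw [map_smul_eq_invert_smul f hf1] at hx
    exact (smul_eq_zero.mp hx).resolve_left
      ((map_ne_zero_iff _ invert.injective).mpr T_one_add_one_ne_zero)

/-- uniqueness of the bar involution. Let `M` be the free `ℤ[u,u⁻¹]`-module
on the involutions of `W` (realized as the span of the `a_w` with `w * w = 1`), with the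
Hecke-type operators `T_s`. If `f : M → M` is ℤ-linear, `f(uⁿm) = u⁻ⁿ f(m)`, `f(a₁) = 0`
and `f((T_s+1)m) = u⁻²(T_s+1)f(m)` for all `m`, `s`, then `f = 0` on `M`. -/
theorem bar_involution_uniqueness {B W : Type*} [Group W] {M : CoxeterMatrix B}
    (cs : CoxeterSystem M W)
    (Ts : B → Module.End (LaurentPolynomial ℤ) (W →₀ LaurentPolynomial ℤ))
    (h1 : ∀ (i : B) (w : W), w * w = 1 →
      cs.simple i * w = w * cs.simple i →
      cs.length w < cs.length (cs.simple i * w) →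
      Ts i (single w 1) + single w 1 =
        (T 1 + 1 : LaurentPolynomial ℤ) • (single w 1 + single (cs.simple i * w) 1))
    (h2 : ∀ (i : B) (w : W), w * w = 1 →
      cs.simple i * w = w * cs.simple i →
      cs.length (cs.simple i * w) < cs.length w →
      Ts i (single w 1) + single w 1 =
        (T 2 - T 1 : LaurentPolynomial ℤ) • (single w 1 + single (cs.simple i * w) 1))
    (h3 : ∀ (i : B) (w : W), w * w = 1 →
      cs.simple i * w ≠ w * cs.simple i →
      cs.length w < cs.length (cs.simple i * w) →
      Ts i (single w 1) + single w 1 =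
        single w 1 + single (cs.simple i * w * cs.simple i) 1)
    (h4 : ∀ (i : B) (w : W), w * w = 1 →
      cs.simple i * w ≠ w * cs.simple i →
      cs.length (cs.simple i * w) < cs.length w →
      Ts i (single w 1) + single w 1 =
        (T 2 : LaurentPolynomial ℤ) • (single w 1 + single (cs.simple i * w * cs.simple i) 1))
    (f : (W →₀ LaurentPolynomial ℤ) →ₗ[ℤ] (W →₀ LaurentPolynomial ℤ))
    (hf1 : ∀ (n : ℤ) (m : W →₀ LaurentPolynomial ℤ),
      f ((T n : LaurentPolynomial ℤ) • m) = (T (-n) : LaurentPolynomial ℤ) • f m)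
    (hf2 : f (single (1 : W) (1 : LaurentPolynomial ℤ)) = 0)
    (hf3 : ∀ (i : B) (m : W →₀ LaurentPolynomial ℤ),
      f (Ts i m + m) = (T (-2) : LaurentPolynomial ℤ) • (Ts i (f m) + f m)) :
    ∀ m : W →₀ LaurentPolynomial ℤ,
      m ∈ Submodule.span (LaurentPolynomial ℤ)
        (Set.range (fun w : {w : W // w * w = 1} => single (w : W) (1 : LaurentPolynomial ℤ))) →
      f m = 0 :=
  bar_involution_uniqueness_general cs Ts h1 h3 f hf1 hf2 hf3
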